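/- arXiv:2109.09391 — 3 statements merged into one kernel-verified Lean document; each statement's English description precedes it below -/
import Mathlib

section
/- Let g be a well-typed RDF graph over a type ι of identifiers. Then the is-more-specific relation ⪯ on identifiers is transitive: if i₁ ⪯ i₂ and i₂ ⪯ i₃ then i₁ ⪯ i₃. -/
/-- `c` is a strict subclass of `c'` (rdfs:subClassOf+). -/
def subClassTC {ι : Type*} (g : Set (ι × ι × ι)) (sc : ι) (c c' : ι) : Prop :=
  Relation.TransGen (fun a b => (a, sc, b) ∈ g) c c'

/-- `p` is a strict subproperty of `p'` (rdfs:subPropertyOf+). -/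
def subPropTC {ι : Type*} (g : Set (ι × ι × ι)) (sp : ι) (p p' : ι) : Prop :=
  Relation.TransGen (fun a b => (a, sp, b) ∈ g) p p'

/-- The interpretation of a class `c`. -/
def classInterp {ι : Type*} (g : Set (ι × ι × ι)) (ty sc : ι) (c : ι) : Set ι :=
  {i | (i, ty, c) ∈ g ∨ ∃ c', subClassTC g sc c' c ∧ (i, ty, c') ∈ g}

/-- The is-more-specific relation `⪯` on identifiers. -/
def moreSpecific {ι : Type*} (g : Set (ι × ι × ι)) (ty sc sp : ι) (i₁ i₂ : ι) : Prop :=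
  i₁ = i₂ ∨ subClassTC g sc i₁ i₂ ∨ subPropTC g sp i₁ i₂ ∨ i₁ ∈ classInterp g ty sc i₂

/-- `i` is an individual identifier: it occurs as the subject of a ty-triple. -/
def isIndividual {ι : Type*} (g : Set (ι × ι × ι)) (ty : ι) (i : ι) : Prop :=
  ∃ c, (i, ty, c) ∈ g

/-- `i` is a class identifier: it occurs as the object of a ty-triple or as the
subject or object of an sc-triple. -/
def isClassId {ι : Type*} (g : Set (ι × ι × ι)) (ty sc : ι) (i : ι) : Prop :=
  (∃ j, (j, ty, i) ∈ g) ∨ (∃ c, (i, sc, c) ∈ g) ∨ (∃ c, (c, sc, i) ∈ g)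

/-- `i` is a predicate identifier: it occurs as the subject or object of an sp-triple. -/
def isPredId {ι : Type*} (g : Set (ι × ι × ι)) (sp : ι) (i : ι) : Prop :=
  (∃ q, (i, sp, q) ∈ g) ∨ (∃ q, (q, sp, i) ∈ g)

/-- The graph is well-typed: individuals, classes and predicates are pairwise disjoint. -/
def WellTyped {ι : Type*} (g : Set (ι × ι × ι)) (ty sc sp : ι) : Prop :=
  (∀ i : ι, ¬(isIndividual g ty i ∧ isClassId g ty sc i)) ∧
  (∀ i : ι, ¬(isIndividual g ty i ∧ isPredId g sp i)) ∧
  (∀ i : ι, ¬(isClassId g ty sc i ∧ isPredId g sp i))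

theorem moreSpecific_trans {ι : Type*} (g : Set (ι × ι × ι)) (ty sc sp : ι)
    (hwt : WellTyped g ty sc sp) (i₁ i₂ i₃ : ι)
    (h₁ : moreSpecific g ty sc sp i₁ i₂) (h₂ : moreSpecific g ty sc sp i₂ i₃) :
    moreSpecific g ty sc sp i₁ i₃ := by
  obtain ⟨hIC, hIP, hCP⟩ := hwt
  -- facts about i₂
  have scClassL : ∀ {a b}, subClassTC g sc a b → isClassId g ty sc a := by
    intro a b h
    obtain ⟨x, hx, -⟩ := Relation.TransGen.head'_iff.mp h
    exact Or.inr (Or.inl ⟨x, hx⟩)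
  have scClassR : ∀ {a b}, subClassTC g sc a b → isClassId g ty sc b := by
    intro a b h
    obtain ⟨x, -, hx⟩ := Relation.TransGen.tail'_iff.mp h
    exact Or.inr (Or.inr ⟨x, hx⟩)
  have spPredL : ∀ {a b}, subPropTC g sp a b → isPredId g sp a := by
    intro a b h
    obtain ⟨x, hx, -⟩ := Relation.TransGen.head'_iff.mp h
    exact Or.inl ⟨x, hx⟩
  have spPredR : ∀ {a b}, subPropTC g sp a b → isPredId g sp b := by
    intro a b h
    obtain ⟨x, -, hx⟩ := Relation.TransGen.tail'_iff.mp h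
    exact Or.inr ⟨x, hx⟩
  have interpInd : ∀ {a b}, a ∈ classInterp g ty sc b → isIndividual g ty a := by
    rintro a b (h | ⟨c', -, h⟩) <;> exact ⟨_, h⟩
  have interpClass : ∀ {a b}, a ∈ classInterp g ty sc b → isClassId g ty sc b := by
    rintro a b (h | ⟨c', hc, -⟩)
    · exact Or.inl ⟨_, h⟩
    · exact scClassR hc
  rcases h₁ with rfl | h₁ | h₁ | h₁
  · exact h₂
  · rcases h₂ with rfl | h₂ | h₂ | h₂
    · exact Or.inr (Or.inl h₁)
    · exact Or.inr (Or.inl (h₁.trans h₂))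
    · exact absurd ⟨scClassR h₁, spPredL h₂⟩ (hCP i₂)
    · exact absurd ⟨interpInd h₂, scClassR h₁⟩ (hIC i₂)
  · rcases h₂ with rfl | h₂ | h₂ | h₂
    · exact Or.inr (Or.inr (Or.inl h₁))
    · exact absurd ⟨scClassL h₂, spPredR h₁⟩ (hCP i₂)
    · exact Or.inr (Or.inr (Or.inl (h₁.trans h₂)))
    · exact absurd ⟨interpInd h₂, spPredR h₁⟩ (hIP i₂)
  · rcases h₂ with rfl | h₂ | h₂ | h₂
    · exact Or.inr (Or.inr (Or.inr h₁))
    · refine Or.inr (Or.inr (Or.inr ?_))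
      rcases h₁ with h | ⟨c', hc, h⟩
      · exact Or.inr ⟨i₂, h₂, h⟩
      · exact Or.inr ⟨c', hc.trans h₂, h⟩
    · exact absurd ⟨interpClass h₁, spPredL h₂⟩ (hCP i₂)
    · exact absurd ⟨interpInd h₂, interpClass h₁⟩ (hIC i₂)
end

section
/- (Lemma 1) Let g be a well-typed RDF graph over a type ι of identifiers, and let i₁, i₂ be identifiers. If i₁ ⪯ i₂, then the natural interpretation of i₁ is contained in the natural interpretation of i₂: ⟦i₁⟧* ⊆ ⟦i₂⟧*. -/
/-- The natural interpretation of an identifier `i`. -/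
def natInterpId {ι : Type*} (g : Set (ι × ι × ι)) (ty sc sp : ι) (i : ι) : Set ι :=
  {i' | moreSpecific g ty sc sp i' i}

theorem natInterpId_mono {ι : Type*} (g : Set (ι × ι × ι)) (ty sc sp : ι)
    (hwt : WellTyped g ty sc sp) (i₁ i₂ : ι)
    (h : moreSpecific g ty sc sp i₁ i₂) :
    natInterpId g ty sc sp i₁ ⊆ natInterpId g ty sc sp i₂ := by
  -- helper facts about endpoints of TransGen chains
  have tgLast : ∀ {r : ι → ι → Prop} {a b : ι}, Relation.TransGen r a b → ∃ c, r c b := by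
    intro r a b h
    induction h with
    | single h => exact ⟨_, h⟩
    | tail _ h _ => exact ⟨_, h⟩
  have tgFirst : ∀ {r : ι → ι → Prop} {a b : ι}, Relation.TransGen r a b → ∃ c, r a c := by
    intro r a b h
    induction h with
    | single h => exact ⟨_, h⟩
    | tail _ _ ih => exact ih
  obtain ⟨hIC, hIP, hCP⟩ := hwt
  intro x hx
  rcases h with rfl | hsc | hsp | hmem
  · exact hx
  · -- i₁ ⊑c i₂
    rcases hx with rfl | hsc' | hsp' | hmem'
    · exact Or.inr (Or.inl hsc)
    · exact Or.inr (Or.inl (hsc'.trans hsc))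
    · -- i₁ is class (subject of sc) and pred (object of sp): contradiction
      obtain ⟨c, hc⟩ := tgFirst hsc
      obtain ⟨q, hq⟩ := tgLast hsp'
      exact absurd ⟨Or.inr (Or.inl ⟨c, hc⟩), Or.inr ⟨q, hq⟩⟩ (hCP i₁)
    · rcases hmem' with hty | ⟨c', hc', hty⟩
      · exact Or.inr (Or.inr (Or.inr (Or.inr ⟨i₁, hsc, hty⟩)))
      · exact Or.inr (Or.inr (Or.inr (Or.inr ⟨c', hc'.trans hsc, hty⟩)))
  · -- i₁ ⊑p i₂
    rcases hx with rfl | hsc' | hsp' | hmem'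
    · exact Or.inr (Or.inr (Or.inl hsp))
    · obtain ⟨c, hc⟩ := tgLast hsc'
      obtain ⟨q, hq⟩ := tgFirst hsp
      exact absurd ⟨Or.inr (Or.inr ⟨c, hc⟩), Or.inl ⟨q, hq⟩⟩ (hCP i₁)
    · exact Or.inr (Or.inr (Or.inl (hsp'.trans hsp)))
    · obtain ⟨q, hq⟩ := tgFirst hsp
      rcases hmem' with hty | ⟨c', hc', hty⟩
      · exact absurd ⟨Or.inl ⟨x, hty⟩, Or.inl ⟨q, hq⟩⟩ (hCP i₁)
      · obtain ⟨c, hc⟩ := tgLast hc'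
        exact absurd ⟨Or.inr (Or.inr ⟨c, hc⟩), Or.inl ⟨q, hq⟩⟩ (hCP i₁)
  · -- i₁ ∈ ⟦i₂⟧, so i₁ is an individual
    have hind : isIndividual g ty i₁ := by
      rcases hmem with hty | ⟨c', _, hty⟩
      · exact ⟨i₂, hty⟩
      · exact ⟨c', hty⟩
    rcases hx with rfl | hsc' | hsp' | hmem'
    · exact Or.inr (Or.inr (Or.inr hmem))
    · obtain ⟨c, hc⟩ := tgLast hsc'
      exact absurd ⟨hind, Or.inr (Or.inr ⟨c, hc⟩)⟩ (hIC i₁)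
    · obtain ⟨q, hq⟩ := tgLast hsp'
      exact absurd ⟨hind, Or.inr ⟨q, hq⟩⟩ (hIP i₁)
    · rcases hmem' with hty | ⟨c', hc', _⟩
      · exact absurd ⟨hind, Or.inl ⟨x, hty⟩⟩ (hIC i₁)
      · obtain ⟨c, hc⟩ := tgLast hc'
        exact absurd ⟨hind, Or.inr (Or.inr ⟨c, hc⟩)⟩ (hIC i₁)
end

section
/- Let g be an RDF graph over a type ι of identifiers, and let t₁ = (s₁,p₁,o₁) and t₂ = (s₂,p₂,o₂) be schema triples such that s₁ = s₂ ∨ s₁ ⊑c s₂, p₁ = p₂ ∨ p₁ ⊑p p₂, and o₁ = o₂ ∨ o₁ ⊑c o₂. Then the ordinary interpretation of t₁ is contained in that of t₂: ⟦t₁⟧ ⊆ ⟦t₂⟧. -/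
/-- The predicate interpretation of `p`. -/
def predInterp {ι : Type*} (g : Set (ι × ι × ι)) (sp : ι) (p : ι) : Set ι :=
  {p' | p' = p ∨ subPropTC g sp p' p}

/-- The ordinary interpretation of a schema triple. -/
def tripleInterp {ι : Type*} (g : Set (ι × ι × ι)) (ty sc sp : ι)
    (t : ι × ι × ι) : Set (ι × ι × ι) :=
  {x | x ∈ g ∧ x.1 ∈ classInterp g ty sc t.1 ∧ x.2.1 ∈ predInterp g sp t.2.1 ∧
       x.2.2 ∈ classInterp g ty sc t.2.2}

lemma classInterp_mono' {ι : Type*} (g : Set (ι × ι × ι)) (ty sc : ι) {c c' : ι}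
    (h : c = c' ∨ subClassTC g sc c c') : classInterp g ty sc c ⊆ classInterp g ty sc c' := by
  rcases h with rfl | h
  · exact le_refl _
  · rintro i (hi | ⟨d, hd, hi⟩)
    · exact Or.inr ⟨c, h, hi⟩
    · exact Or.inr ⟨d, hd.trans h, hi⟩

lemma predInterp_mono' {ι : Type*} (g : Set (ι × ι × ι)) (sp : ι) {p p' : ι}
    (h : p = p' ∨ subPropTC g sp p p') : predInterp g sp p ⊆ predInterp g sp p' := by
  rcases h with rfl | h
  · exact le_refl _
  · rintro q (rfl | hq)
    · exact Or.inr h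
    · exact Or.inr (hq.trans h)

theorem tripleInterp_mono {ι : Type*} (g : Set (ι × ι × ι)) (ty sc sp : ι)
    (s₁ p₁ o₁ s₂ p₂ o₂ : ι)
    (hs : s₁ = s₂ ∨ subClassTC g sc s₁ s₂)
    (hp : p₁ = p₂ ∨ subPropTC g sp p₁ p₂)
    (ho : o₁ = o₂ ∨ subClassTC g sc o₁ o₂) :
    tripleInterp g ty sc sp (s₁, p₁, o₁) ⊆ tripleInterp g ty sc sp (s₂, p₂, o₂) := by
  rintro ⟨x1,x2,x3⟩ ⟨hg, h1, h2, h3⟩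
  exact ⟨hg, classInterp_mono' g ty sc hs h1, predInterp_mono' g sp hp h2,
    classInterp_mono' g ty sc ho h3⟩
end
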